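/- Let G=(V,E) be a finite connected undirected graph with positive conductances and marked vertex b. Under the probability measure P on two-component spanning forests proportional to weight, the second moment of the number of vertices of the floating component satisfies E(|Σ|²) = ℓ*·(|V|/(|V|−1))·E(τ_b), where ℓ* = κ(G)(|V|−1)/κ₂(G) and E(τ_b) = (1/|V|)·Σ_{u,v∈V} G_{u,v}. Equivalently, E(|Σ|²) = (κ(G)/κ₂(G))·Σ_{u,v∈V} G_{u,v}. -/

import Mathlib

/-!
Write `F(u, v)` for the weight of the 2SFs in which both `u` and `v` float. Summing over `u` and
`v` gives `∑_B wt(B) |Σ_B|²`, so the theorem amounts to `G = F / κ`, i.e. `Δ_D F = κ I`.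
Expanding the Laplacian, `(Δ F)(u, v) = ∑_w c(u, w) (F(u, v) - F(w, v))`, whose terms are indexed
by pairs `(w, B)` such that the edge `uw` joins the two components of `B`. Adding `uw` turns such
a pair into a spanning tree `T`, and `w` is recovered as the first step of the path in `T` from
`u` to `b` (positive terms) or from `u` to `v` (negative terms). For `u = v` only positive terms
occur and they add up to `κ`; for `u ≠ v` both families are in bijection with the trees in which
the paths from `u` to `b` and to `v` leave `u` along different edges, so they cancel.
-/

open scoped Classical BigOperators

noncomputable section

namespace TwoSF

variable {V : Type*} [Fintype V] [DecidableEq V]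

/-- `u` and `v` are linked by the edges in `B`. -/
def Linked (B : Finset (Sym2 V)) : V → V → Prop :=
  Relation.ReflTransGen fun a b => s(a, b) ∈ B

/-- The number of connected components of the spanning subgraph `(V, B)`. -/
def ncomp (B : Finset (Sym2 V)) : ℕ :=
  Nat.card (Quot (Linked B))

/-- `B` is a spanning forest of the complete graph on `V` with exactly `k`
connected components: it has `k` components and, by the rank count
`|B| + k = |V|`, it is acyclic (in particular it contains no loop edge).
Taking `k = 1` gives spanning trees, `k = 2` gives two-component spanning
forests (2SF). -/
def IsSF (k : ℕ) (B : Finset (Sym2 V)) : Prop :=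
  ncomp B = k ∧ B.card + k = Fintype.card V

/-- The weight of an edge set: the product of its conductances. -/
def wt (c : Sym2 V → ℝ) (B : Finset (Sym2 V)) : ℝ := ∏ e ∈ B, c e

/-- κ: the weighted sum of spanning trees.  Edge sets containing a non-edge
(an `e` with `c e = 0`) contribute weight `0`, so this is the weighted number
of spanning trees of the graph whose edges are the support of `c`. -/
def kappa1 (c : Sym2 V → ℝ) : ℝ := ∑ B ∈ Finset.univ.filter (IsSF 1), wt c B

/-- κ₂: the weighted sum of two-component spanning forests. -/
def kappa2 (c : Sym2 V → ℝ) : ℝ := ∑ B ∈ Finset.univ.filter (IsSF 2), wt c B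

/-- The floating component of `B`: the set of vertices not linked to `b`. -/
def floating (b : V) (B : Finset (Sym2 V)) : Finset V :=
  Finset.univ.filter fun v => ¬ Linked B b v

/-- The graph Laplacian `Δ` of the graph with conductances `c`. -/
def lap (c : Sym2 V → ℝ) : Matrix V V ℝ := fun u v =>
  if u = v then ∑ w ∈ Finset.univ.filter (· ≠ u), c s(u, w) else -c s(u, v)

/-- The Dirichlet Laplacian `Δ_D`, indexed by `V \ {b}`. -/
def dlap (c : Sym2 V → ℝ) (b : V) : Matrix {w : V // w ≠ b} {w : V // w ≠ b} ℝ :=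
  Matrix.of fun p q => lap c p.1 q.1

/-- The Green function with Dirichlet boundary condition at `b` (the inverse of
the Dirichlet Laplacian), with the convention that it vanishes as soon as one
of its arguments is `b`. -/
def green (c : Sym2 V → ℝ) (b : V) (u v : V) : ℝ :=
  if hu : u = b then 0 else if hv : v = b then 0 else (dlap c b)⁻¹ ⟨u, hu⟩ ⟨v, hv⟩

/-- The probability of the event `p` under the probability measure on
two-component spanning forests assigning to each 2SF a probability
proportional to its weight. -/
def pr2 (c : Sym2 V → ℝ) (p : Finset (Sym2 V) → Prop) : ℝ :=
  (∑ B ∈ Finset.univ.filter (fun B => IsSF 2 B ∧ p B), wt c B) / kappa2 c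

/-- The expectation of `((floating b B).card : ℝ) ^ k`, i.e. of `|Σ|^k`, under
the probability measure on two-component spanning forests proportional to
weight. -/
def expPow (c : Sym2 V → ℝ) (b : V) (k : ℕ) : ℝ :=
  (∑ B ∈ Finset.univ.filter (IsSF 2), wt c B * ((floating b B).card : ℝ) ^ k) / kappa2 c

/-- `|∂Σ|`: the sum of the conductances of the edges having exactly one
endpoint in the floating component of `B`. -/
def bdryWt (c : Sym2 V → ℝ) (b : V) (B : Finset (Sym2 V)) : ℝ :=
  ∑ u ∈ floating b B, ∑ v ∈ (floating b B)ᶜ, c s(u, v)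

/-- The expectation of `|∂Σ|` under the probability measure on two-component
spanning forests proportional to weight. -/
def expBdry (c : Sym2 V → ℝ) (b : V) : ℝ :=
  (∑ B ∈ Finset.univ.filter (IsSF 2), wt c B * bdryWt c b B) / kappa2 c

end TwoSF

namespace TwoSF

section Linked

variable {V : Type*} {B B' : Finset (Sym2 V)} {a c x y z : V}

@[refl]
theorem Linked.refl (B : Finset (Sym2 V)) (x : V) : Linked B x x := Relation.ReflTransGen.refl

theorem Linked.trans (h : Linked B x y) (h' : Linked B y z) : Linked B x z :=
  Relation.ReflTransGen.trans h h'

theorem Linked.of_mem (h : s(x, y) ∈ B) : Linked B x y := Relation.ReflTransGen.single h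

theorem Linked.symm (h : Linked B x y) : Linked B y x := by
  induction h with
  | refl => rfl
  | tail _ hedge ih => exact (Linked.of_mem (Sym2.eq_swap ▸ hedge)).trans ih

theorem linked_comm : Linked B x y ↔ Linked B y x := ⟨Linked.symm, Linked.symm⟩

theorem Linked.mono (h : Linked B x y) (hB : B ⊆ B') : Linked B' x y :=
  Relation.ReflTransGen.mono (fun _ _ hm => hB hm) _ _ h

theorem Linked.of_linked_edges (hE : ∀ p q, s(p, q) ∈ B' → Linked B p q)
    (h : Linked B' x y) : Linked B x y := by
  induction h with
  | refl => rfl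
  | tail _ hedge ih => exact ih.trans (hE _ _ hedge)

theorem quot_mk_eq_iff : Quot.mk (Linked B) x = Quot.mk _ y ↔ Linked B x y := by
  rw [Quot.eq]
  exact Equivalence.eqvGen_iff ⟨Linked.refl B, Linked.symm, Linked.trans⟩

theorem linked_empty_iff : Linked (∅ : Finset (Sym2 V)) x y ↔ x = y := by
  refine ⟨fun h => ?_, fun h => h ▸ .refl _ _⟩
  induction h with
  | refl => rfl
  | tail _ he => exact absurd he (Finset.notMem_empty _)

variable [DecidableEq V]

theorem linked_insert_iff :
    Linked (insert s(a, c) B) x y ↔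
      Linked B x y ∨ (Linked B x a ∧ Linked B c y) ∨ (Linked B x c ∧ Linked B a y) := by
  constructor
  · intro h
    induction h with
    | refl => exact Or.inl (.refl _ _)
    | @tail m w _ hedge ih =>
      rcases Finset.mem_insert.mp hedge with he | he
      · rcases Sym2.eq_iff.mp he with ⟨rfl, rfl⟩ | ⟨rfl, rfl⟩
        · rcases ih with h | ⟨h, -⟩ | ⟨h, -⟩
          · exact Or.inr (Or.inl ⟨h, .refl _ _⟩)
          · exact Or.inr (Or.inl ⟨h, .refl _ _⟩)
          · exact Or.inl h
        · rcases ih with h | ⟨h, -⟩ | ⟨h, -⟩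
          · exact Or.inr (Or.inr ⟨h, .refl _ _⟩)
          · exact Or.inl h
          · exact Or.inr (Or.inr ⟨h, .refl _ _⟩)
      · rcases ih with h | ⟨h1, h2⟩ | ⟨h1, h2⟩
        · exact Or.inl (h.trans (.of_mem he))
        · exact Or.inr (Or.inl ⟨h1, h2.trans (.of_mem he)⟩)
        · exact Or.inr (Or.inr ⟨h1, h2.trans (.of_mem he)⟩)
  · have hsub := Finset.subset_insert s(a, c) B
    have hac : Linked (insert s(a, c) B) a c := .of_mem (Finset.mem_insert_self _ _)
    rintro (h | ⟨h1, h2⟩ | ⟨h1, h2⟩)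
    · exact h.mono hsub
    · exact ((h1.mono hsub).trans hac).trans (h2.mono hsub)
    · exact ((h1.mono hsub).trans hac.symm).trans (h2.mono hsub)

end Linked

section Components

variable {V : Type*} {B : Finset (Sym2 V)} {a c : V}

theorem ncomp_eq_one_iff [Nonempty V] : ncomp B = 1 ↔ ∀ x y, Linked B x y := by
  rw [ncomp, Nat.card_eq_one_iff_unique]
  constructor
  · rintro ⟨_, _⟩ x y
    exact quot_mk_eq_iff.mp (Subsingleton.elim _ _)
  · intro h
    refine ⟨⟨?_⟩, ⟨Quot.mk _ (Classical.arbitrary V)⟩⟩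
    rintro ⟨x⟩ ⟨y⟩
    exact quot_mk_eq_iff.mpr (h x y)

variable [Fintype V]

theorem ncomp_pos [Nonempty V] (B : Finset (Sym2 V)) : 0 < ncomp B := by
  have := Quot.finite (Linked B)
  have : Nonempty (Quot (Linked B)) := ⟨Quot.mk _ (Classical.arbitrary V)⟩
  exact Nat.card_pos

theorem ncomp_empty : ncomp (∅ : Finset (Sym2 V)) = Fintype.card V := by
  rw [ncomp, ← Nat.card_eq_fintype_card]
  refine Nat.card_congr
    (Equiv.ofBijective (Quot.lift id fun _ _ => linked_empty_iff.mp) ⟨?_, ?_⟩)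
  · rintro ⟨x⟩ ⟨y⟩ h
    exact quot_mk_eq_iff.mpr (linked_empty_iff.mpr h)
  · exact fun x => ⟨Quot.mk _ x, rfl⟩

variable [DecidableEq V]

theorem ncomp_insert_lt (hac : ¬ Linked B a c) : ncomp (insert s(a, c) B) < ncomp B := by
  have := Fintype.ofFinite (Quot (Linked B))
  have := Fintype.ofFinite (Quot (Linked (insert s(a, c) B)))
  rw [ncomp, ncomp, Nat.card_eq_fintype_card, Nat.card_eq_fintype_card]
  refine Fintype.card_lt_of_surjective_not_injective
    (Quot.map id fun _ _ h => h.mono (Finset.subset_insert _ _))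
    (by rintro ⟨z⟩; exact ⟨Quot.mk _ z, rfl⟩) fun hinj => hac (quot_mk_eq_iff.mp ?_)
  exact hinj (quot_mk_eq_iff.mpr (.of_mem (Finset.mem_insert_self _ _)))

/-- Away from the class of `c`, the map induced on components is injective. -/
theorem ncomp_le_ncomp_insert_add_one (e : Sym2 V) : ncomp B ≤ ncomp (insert e B) + 1 := by
  induction e using Sym2.ind with | _ a c => ?_
  have := Quot.finite (Linked (insert s(a, c) B))
  let q : Quot (Linked B) → Quot (Linked (insert s(a, c) B)) :=
    Quot.map id fun _ _ h => h.mono (Finset.subset_insert _ _)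
  let g : Quot (Linked B) → Option (Quot (Linked (insert s(a, c) B))) := fun p =>
    if p = Quot.mk _ c then none else some (q p)
  have hg : Function.Injective g := by
    rintro ⟨x⟩ ⟨y⟩
    simp only [g, q, Quot.map, id, quot_mk_eq_iff]
    split_ifs with hx hy hy
    · exact fun _ => hx.trans hy.symm
    · simp
    · simp
    · intro hxy
      rcases linked_insert_iff.mp (quot_mk_eq_iff.mp (Option.some.inj hxy)) with
        h | ⟨-, h⟩ | ⟨h, -⟩
      · exact h
      · exact absurd h.symm hy
      · exact absurd h hx
  have := Nat.card_le_card_of_injective g hg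
  rwa [Finite.card_option] at this

theorem card_le_ncomp_add_card (B : Finset (Sym2 V)) : Fintype.card V ≤ ncomp B + B.card := by
  induction B using Finset.induction_on with
  | empty => simp [ncomp_empty]
  | @insert e s he ih =>
    have := ncomp_le_ncomp_insert_add_one (B := s) e
    rw [Finset.card_insert_of_notMem he]
    omega

end Components

section Forests

variable {V : Type*} [Fintype V] {B T : Finset (Sym2 V)} {a c : V}

theorem IsSF.linked (hT : IsSF 1 T) (x y : V) : Linked T x y :=
  have : Nonempty V := ⟨x⟩
  ncomp_eq_one_iff.mp hT.1 x y

variable [DecidableEq V]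

theorem IsSF.not_linked_erase (hT : IsSF 1 T) (h : s(a, c) ∈ T) :
    ¬ Linked (T.erase s(a, c)) a c := by
  intro hac
  have : Nonempty V := ⟨a⟩
  have hconn : ncomp (T.erase s(a, c)) = 1 := by
    refine ncomp_eq_one_iff.mpr fun x y => (hT.linked x y).of_linked_edges fun p q hpq => ?_
    by_cases he : s(p, q) = s(a, c)
    · rcases Sym2.eq_iff.mp he with ⟨rfl, rfl⟩ | ⟨rfl, rfl⟩
      · exact hac
      · exact hac.symm
    · exact .of_mem (Finset.mem_erase.mpr ⟨he, hpq⟩)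
  have := card_le_ncomp_add_card (T.erase s(a, c))
  rw [hconn, Finset.card_erase_of_mem h] at this
  have := hT.2
  have := Finset.card_pos.mpr ⟨_, h⟩
  omega

theorem IsSF.linked_erase_or (hT : IsSF 1 T) (h : s(a, c) ∈ T) (x : V) :
    Linked (T.erase s(a, c)) a x ∨ Linked (T.erase s(a, c)) c x := by
  have hx := hT.linked a x
  rw [← Finset.insert_erase h, linked_insert_iff] at hx
  rcases hx with h | ⟨-, h⟩ | ⟨-, h⟩
  · exact Or.inl h
  · exact Or.inr h
  · exact Or.inl h

theorem IsSF.isSF_two_erase (hT : IsSF 1 T) {e : Sym2 V} (he : e ∈ T) :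
    IsSF 2 (T.erase e) := by
  have hge := card_le_ncomp_add_card (T.erase e)
  have hle := ncomp_le_ncomp_insert_add_one (B := T.erase e) e
  rw [Finset.insert_erase he, hT.1] at hle
  rw [Finset.card_erase_of_mem he] at hge
  have := hT.2
  have := Finset.card_pos.mpr ⟨_, he⟩
  refine ⟨by omega, ?_⟩
  rw [Finset.card_erase_of_mem he]
  omega

theorem IsSF.isSF_one_insert (hB : IsSF 2 B) (hac : ¬ Linked B a c) :
    IsSF 1 (insert s(a, c) B) := by
  have : Nonempty V := ⟨a⟩
  have hnm : s(a, c) ∉ B := fun h => hac (.of_mem h)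
  have hlt := ncomp_insert_lt hac
  have := ncomp_pos (insert s(a, c) B)
  have := hB.2
  rw [hB.1] at hlt
  rw [IsSF, Finset.card_insert_of_notMem hnm]
  omega

theorem IsSF.linked_iff (hB : IsSF 2 B) (b x y : V) :
    Linked B x y ↔ (Linked B b x ↔ Linked B b y) := by
  refine ⟨fun h => ⟨fun hx => hx.trans h, fun hy => hy.trans h.symm⟩, fun h => ?_⟩
  by_cases hx : Linked B b x
  · exact hx.symm.trans (h.mp hx)
  rcases linked_insert_iff.mp ((hB.isSF_one_insert hx).linked x y) with
    h' | ⟨h', -⟩ | ⟨-, h'⟩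
  · exact h'
  · exact absurd h'.symm hx
  · exact absurd (h.mpr h') hx

/-- A forest inside `E` with as few components as possible is a spanning tree: an edge of `E`
joining two of its components would give a forest with fewer. -/
theorem exists_isSF_one_subset [Nonempty V] {E : Finset (Sym2 V)} (hE : ncomp E = 1) :
    ∃ T ⊆ E, IsSF 1 T := by
  obtain ⟨B, hB, hmin⟩ := (E.powerset.filter fun B => ncomp B + B.card = Fintype.card V)
    |>.exists_min_image ncomp ⟨∅, by simp [ncomp_empty]⟩
  simp only [Finset.mem_filter, Finset.mem_powerset] at hB hmin
  suffices hB1 : ncomp B = 1 from ⟨B, hB.1, hB1, by omega⟩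
  by_contra hne
  obtain ⟨p, q, hpq, hnl⟩ : ∃ p q, s(p, q) ∈ E ∧ ¬ Linked B p q := by
    by_contra! h
    exact hne (ncomp_eq_one_iff.mpr fun x y => (ncomp_eq_one_iff.mp hE x y).of_linked_edges h)
  have hnm : s(p, q) ∉ B := fun h => hnl (.of_mem h)
  have hlt := ncomp_insert_lt hnl
  have hge := card_le_ncomp_add_card (insert s(p, q) B)
  rw [Finset.card_insert_of_notMem hnm] at hge
  have := hmin (insert s(p, q) B)
    ⟨Finset.insert_subset hpq hB.1, by rw [Finset.card_insert_of_notMem hnm]; omega⟩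
  omega

end Forests

section FirstStep

variable {V : Type*} [Fintype V] {T : Finset (Sym2 V)} {u t x z z' : V}

def crossPairs (u t : V) : Finset (V × Finset (Sym2 V)) :=
  Finset.univ.filter fun p => IsSF 2 p.2 ∧ ¬ Linked p.2 u t ∧ Linked p.2 p.1 t

theorem sum_crossPairs_eq_sum_sum (g : V × Finset (Sym2 V) → ℝ) (u t : V) :
    ∑ p ∈ crossPairs u t, g p = ∑ w, ∑ B ∈ Finset.univ.filter (IsSF 2),
      if ¬ Linked B u t ∧ Linked B w t then g (w, B) else 0 := by
  rw [crossPairs, Finset.sum_filter, Fintype.sum_prod_type]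
  refine Finset.sum_congr rfl fun w _ => ?_
  rw [Finset.sum_filter]
  simp only [ite_and]

variable [DecidableEq V]

/-- In a tree `T`, the neighbour of `u` on the path from `u` to `t`, characterised as the unique
`z` whose edge `uz` separates `u` from `t` (the junk value is `u`). -/
def firstStep (T : Finset (Sym2 V)) (u t : V) : V :=
  if h : ∃ z, s(u, z) ∈ T ∧ ¬ Linked (T.erase s(u, z)) u t then h.choose else u

theorem IsSF.exists_cut_edge (hT : IsSF 1 T) (hut : u ≠ t) :
    ∃ z, s(u, z) ∈ T ∧ ¬ Linked (T.erase s(u, z)) u t := by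
  suffices ∀ x, Linked T u x →
      x = u ∨ ∃ z, s(u, z) ∈ T ∧ ¬ Linked (T.erase s(u, z)) u x from
    (this t (hT.linked u t)).resolve_left hut.symm
  intro x hx
  induction hx with
  | refl => exact Or.inl rfl
  | @tail p q _ hpq ih =>
    by_cases hqu : q = u
    · exact Or.inl hqu
    refine Or.inr ?_
    rcases ih with rfl | ⟨z, hz, hzp⟩
    · exact ⟨q, hpq, hT.not_linked_erase hpq⟩
    refine ⟨z, hz, fun huq =>
      hzp (huq.trans (Linked.of_mem (Finset.mem_erase.mpr ⟨?_, hpq⟩)).symm)⟩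
    intro he
    rcases Sym2.eq_iff.mp he with ⟨rfl, -⟩ | ⟨-, rfl⟩
    · exact hzp (.refl _ _)
    · exact hqu rfl

theorem IsSF.cut_edge_unique (hT : IsSF 1 T) (hz : s(u, z) ∈ T)
    (hzt : ¬ Linked (T.erase s(u, z)) u t) (hz' : s(u, z') ∈ T)
    (hz't : ¬ Linked (T.erase s(u, z')) u t) : z = z' := by
  by_contra hne
  have hmem : s(u, z') ∈ T.erase s(u, z) :=
    Finset.mem_erase.mpr ⟨fun h => hne (Sym2.congr_right.mp h).symm, hz'⟩
  have hsub : (T.erase s(u, z)).erase s(u, z') ⊆ T.erase s(u, z') :=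
    Finset.erase_subset_erase _ (Finset.erase_subset _ _)
  have hzt' := (hT.linked_erase_or hz t).resolve_left hzt
  rw [← Finset.insert_erase hmem, linked_insert_iff] at hzt'
  rcases hzt' with h | ⟨h, -⟩ | ⟨-, h⟩
  · have huz : Linked (T.erase s(u, z')) u z :=
      .of_mem (Finset.mem_erase.mpr ⟨fun h => hne (Sym2.congr_right.mp h), hz⟩)
    exact hz't (huz.trans (h.mono hsub))
  · exact hT.not_linked_erase hz (h.mono (Finset.erase_subset _ _)).symm
  · exact hzt (h.mono (Finset.erase_subset _ _))

theorem IsSF.firstStep_eq_iff (hT : IsSF 1 T) (hut : u ≠ t) :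
    firstStep T u t = z ↔ s(u, z) ∈ T ∧ ¬ Linked (T.erase s(u, z)) u t := by
  have h := hT.exists_cut_edge hut
  rw [firstStep, dif_pos h]
  exact ⟨fun hz => hz ▸ h.choose_spec,
    fun hz => hT.cut_edge_unique h.choose_spec.1 h.choose_spec.2 hz.1 hz.2⟩

theorem IsSF.firstStep_spec (hT : IsSF 1 T) (hut : u ≠ t) :
    s(u, firstStep T u t) ∈ T ∧ ¬ Linked (T.erase s(u, firstStep T u t)) u t :=
  (hT.firstStep_eq_iff hut).mp rfl

theorem IsSF.not_linked_erase_firstStep_iff (hT : IsSF 1 T) (hux : u ≠ x) (hut : u ≠ t) :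
    ¬ Linked (T.erase s(u, firstStep T u t)) u x ↔ firstStep T u x = firstStep T u t := by
  rw [hT.firstStep_eq_iff hux]
  exact ⟨fun h => ⟨(hT.firstStep_spec hut).1, h⟩, And.right⟩

/-- Both sides say that the paths from `u` to `x` and to `t` leave `u` along different edges. -/
theorem IsSF.linked_erase_firstStep_comm (hT : IsSF 1 T) (hux : u ≠ x) (hut : u ≠ t) :
    Linked (T.erase s(u, firstStep T u t)) u x ↔ Linked (T.erase s(u, firstStep T u x)) u t := by
  rw [← not_iff_not, hT.not_linked_erase_firstStep_iff hux hut,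
    hT.not_linked_erase_firstStep_iff hut hux, eq_comm]

/-- The change of variables is `(w, B) ↦ insert s(u, w) B`. -/
theorem sum_crossPairs (c : Sym2 V → ℝ) (hut : u ≠ t) (f : V × Finset (Sym2 V) → ℝ) :
    ∑ p ∈ crossPairs u t, c s(u, p.1) * wt c p.2 * f p =
      ∑ T ∈ Finset.univ.filter (IsSF 1),
        wt c T * f (firstStep T u t, T.erase s(u, firstStep T u t)) := by
  have hfwd : ∀ p ∈ crossPairs u t, IsSF 1 (insert s(u, p.1) p.2) ∧ s(u, p.1) ∉ p.2 ∧
      firstStep (insert s(u, p.1) p.2) u t = p.1 := by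
    rintro ⟨w, B⟩ hp
    simp only [crossPairs, Finset.mem_filter, Finset.mem_univ, true_and] at hp
    obtain ⟨hB, hut', hwt⟩ := hp
    have huw : ¬ Linked B u w := fun h => hut' (h.trans hwt)
    have hnm : s(u, w) ∉ B := fun h => huw (.of_mem h)
    have hT := hB.isSF_one_insert huw
    refine ⟨hT, hnm, (hT.firstStep_eq_iff hut).mpr ⟨Finset.mem_insert_self _ _, ?_⟩⟩
    rwa [Finset.erase_insert hnm]
  refine Finset.sum_nbij' (fun p => insert s(u, p.1) p.2)
    (fun T => (firstStep T u t, T.erase s(u, firstStep T u t))) ?_ ?_ ?_ ?_ ?_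
  · intro p hp
    simpa using (hfwd p hp).1
  · intro T hT
    obtain ⟨-, hT⟩ := Finset.mem_filter.mp hT
    obtain ⟨hmem, hsep⟩ := hT.firstStep_spec hut
    simp only [crossPairs, Finset.mem_filter, Finset.mem_univ, true_and]
    exact ⟨hT.isSF_two_erase hmem, hsep, (hT.linked_erase_or hmem t).resolve_left hsep⟩
  · intro p hp
    obtain ⟨-, hnm, hz⟩ := hfwd p hp
    simp only [hz, Finset.erase_insert hnm]
  · intro T hT
    obtain ⟨-, hT⟩ := Finset.mem_filter.mp hT
    exact Finset.insert_erase (hT.firstStep_spec hut).1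
  · intro p hp
    obtain ⟨-, hnm, hz⟩ := hfwd p hp
    rw [hz, Finset.erase_insert hnm, wt, wt, Finset.prod_insert hnm]

end FirstStep

section Green

variable {V : Type*} [Fintype V] {B : Finset (Sym2 V)} {b u v w x : V}

theorem mem_floating : x ∈ floating b B ↔ ¬ Linked B b x := by
  simp [floating]

def floatingWt (c : Sym2 V → ℝ) (b u v : V) : ℝ :=
  ∑ B ∈ Finset.univ.filter (IsSF 2),
    if u ∈ floating b B ∧ v ∈ floating b B then wt c B else 0

theorem floatingWt_base_left (c : Sym2 V → ℝ) (b v : V) : floatingWt c b b v = 0 := by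
  simp [floatingWt, mem_floating, Linked.refl]

theorem floatingWt_base_right (c : Sym2 V → ℝ) (b u : V) : floatingWt c b u b = 0 := by
  simp [floatingWt, mem_floating, Linked.refl]

theorem sum_floatingWt (c : Sym2 V → ℝ) (b : V) :
    ∑ u, ∑ v, floatingWt c b u v =
      ∑ B ∈ Finset.univ.filter (IsSF 2), wt c B * ((floating b B).card : ℝ) ^ 2 := by
  simp only [floatingWt]
  rw [Finset.sum_congr rfl fun u _ => Finset.sum_comm, Finset.sum_comm]
  refine Finset.sum_congr rfl fun B _ => ?_
  simp [ite_and, Finset.sum_ite_mem]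
  ring

theorem IsSF.floating_indicator_sub (hB : IsSF 2 B) (r : ℝ) :
    ((if u ∈ floating b B ∧ v ∈ floating b B then r else 0) -
      if w ∈ floating b B ∧ v ∈ floating b B then r else 0) =
    (if ¬ Linked B u b ∧ Linked B w b then r * (if Linked B u v then 1 else 0) else 0) -
      if ¬ Linked B u v ∧ Linked B w v then r * (if Linked B u b then 1 else 0) else 0 := by
  simp only [mem_floating, hB.linked_iff b u v, hB.linked_iff b w v, linked_comm (x := u) (y := b),
    linked_comm (x := w) (y := b)]
  by_cases hu : Linked B b u <;> by_cases hv : Linked B b v <;> by_cases hw : Linked B b w <;>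
    simp [hu, hv, hw]

theorem sum_mul_floatingWt_sub (c : Sym2 V → ℝ) (b u v : V) :
    ∑ w, c s(u, w) * (floatingWt c b u v - floatingWt c b w v) =
      ∑ p ∈ crossPairs u b, c s(u, p.1) * wt c p.2 * (if Linked p.2 u v then 1 else 0) -
        ∑ p ∈ crossPairs u v, c s(u, p.1) * wt c p.2 * (if Linked p.2 u b then 1 else 0) := by
  rw [sum_crossPairs_eq_sum_sum, sum_crossPairs_eq_sum_sum, ← Finset.sum_sub_distrib]
  refine Finset.sum_congr rfl fun w _ => ?_
  rw [floatingWt, floatingWt, ← Finset.sum_sub_distrib, Finset.mul_sum,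
    ← Finset.sum_sub_distrib]
  refine Finset.sum_congr rfl fun B hB => ?_
  rw [mul_sub, mul_ite, mul_ite, mul_zero, (Finset.mem_filter.mp hB).2.floating_indicator_sub]

variable [DecidableEq V]

theorem sum_lap_mul (c : Sym2 V → ℝ) (f : V → ℝ) (u : V) :
    ∑ w, lap c u w * f w = ∑ w, c s(u, w) * (f u - f w) := by
  have hoff : ∀ w ∈ ({u}ᶜ : Finset V), lap c u w * f w = -(c s(u, w) * f w) := by
    intro w hw
    rw [lap, if_neg (Finset.mem_compl.mp hw ∘ Finset.mem_singleton.mpr ∘ Eq.symm), neg_mul]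
  rw [Fintype.sum_eq_add_sum_compl u, Fintype.sum_eq_add_sum_compl u, Finset.sum_congr rfl hoff,
    sub_self, mul_zero, zero_add, lap, if_pos rfl, Finset.filter_ne', ← Finset.compl_singleton]
  simp only [mul_sub, Finset.sum_sub_distrib, Finset.sum_mul, Finset.sum_neg_distrib,
    ← sub_eq_add_neg]

theorem sum_lap_mul_floatingWt (c : Sym2 V → ℝ) (hu : u ≠ b) (hv : v ≠ b) :
    ∑ w, lap c u w * floatingWt c b w v = if u = v then kappa1 c else 0 := by
  rw [sum_lap_mul, sum_mul_floatingWt_sub, sum_crossPairs c hu]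
  split_ifs with huv
  · subst huv
    have : crossPairs u u = ∅ := by simp [crossPairs, Linked.refl]
    simp [this, Linked.refl, kappa1]
  · rw [sum_crossPairs c huv, sub_eq_zero]
    refine Finset.sum_congr rfl fun T hT => ?_
    rw [(Finset.mem_filter.mp hT).2.linked_erase_firstStep_comm huv hu]

theorem dlap_mul_floatingWt (c : Sym2 V → ℝ) (b : V) :
    dlap c b * Matrix.of (fun p q : {w : V // w ≠ b} => floatingWt c b p q) = kappa1 c • 1 := by
  ext p q
  have hsum : ∑ r : {w : V // w ≠ b}, dlap c b p r * floatingWt c b r q =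
      ∑ w, lap c p w * floatingWt c b w q := by
    rw [Fintype.sum_eq_add_sum_subtype_ne _ b, floatingWt_base_left, mul_zero, zero_add]
    rfl
  rw [Matrix.mul_apply, Matrix.smul_apply, Matrix.one_apply, smul_eq_mul, mul_ite, mul_one,
    mul_zero]
  simp only [Matrix.of_apply]
  rw [hsum, sum_lap_mul_floatingWt c p.2 q.2]
  simp only [Subtype.ext_iff]

theorem green_eq (c : Sym2 V → ℝ) (hκ : kappa1 c ≠ 0) (b u v : V) :
    green c b u v = (kappa1 c)⁻¹ * floatingWt c b u v := by
  unfold green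
  split_ifs with hu hv
  · rw [hu, floatingWt_base_left, mul_zero]
  · rw [hv, floatingWt_base_right, mul_zero]
  · rw [Matrix.inv_eq_right_inv (B := (kappa1 c)⁻¹ • Matrix.of fun p q : {w : V // w ≠ b} =>
      floatingWt c b p q)]
    · rfl
    · rw [Matrix.mul_smul, dlap_mul_floatingWt, smul_smul, inv_mul_cancel₀ hκ, one_smul]

theorem kappa1_pos {c : Sym2 V → ℝ} (hc : ∀ e, 0 ≤ c e)
    (hconn : ncomp (Finset.univ.filter fun e : Sym2 V => c e ≠ 0) = 1) [Nonempty V] :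
    0 < kappa1 c := by
  obtain ⟨T, hTsub, hT⟩ := exists_isSF_one_subset hconn
  have hwt : 0 < wt c T := Finset.prod_pos fun e he =>
    (hc e).lt_of_ne (Finset.mem_filter.mp (hTsub he)).2.symm
  exact hwt.trans_le <| Finset.single_le_sum (f := wt c)
    (fun B _ => Finset.prod_nonneg fun e _ => hc e)
    (Finset.mem_filter.mpr ⟨Finset.mem_univ _, hT⟩)

theorem expPow_two_eq {c : Sym2 V → ℝ} (hκ : kappa1 c ≠ 0) (b : V) :
    expPow c b 2 = kappa1 c * (∑ u, ∑ v, green c b u v) / kappa2 c := by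
  simp only [green_eq c hκ, ← Finset.mul_sum, sum_floatingWt, expPow]
  field_simp

end Green

end TwoSF

open TwoSF

theorem statement_9_general {V : Type*} [Fintype V] [DecidableEq V] (c : Sym2 V → ℝ)
    (hc : ∀ e, 0 ≤ c e)
    (hconn : ncomp (Finset.univ.filter fun e : Sym2 V => c e ≠ 0) = 1)
    (b : V) :
    expPow c b 2 =
      (kappa1 c * ((Fintype.card V : ℝ) - 1) / kappa2 c) *
        ((Fintype.card V : ℝ) / ((Fintype.card V : ℝ) - 1)) *
        ((∑ u : V, ∑ v : V, green c b u v) / (Fintype.card V : ℝ)) := by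
  have : Nonempty V := ⟨b⟩
  rw [expPow_two_eq (kappa1_pos hc hconn).ne' b]
  rcases le_or_gt (Fintype.card V) 1 with hV | hV
  · have : Subsingleton V := Fintype.card_le_one_iff_subsingleton.mp hV
    simp [green, Subsingleton.elim _ b]
  · have hn : (Fintype.card V : ℝ) - 1 ≠ 0 := by
      have : (1 : ℝ) < Fintype.card V := by exact_mod_cast hV
      linarith
    field_simp

/-- For a finite connected undirected graph with positive
conductances and marked vertex `b`, the second moment of the number of
vertices of the floating component satisfies
`E(|Σ|²) = ℓ* · (|V|/(|V|-1)) · E(τ_b)`, where `ℓ* = κ(|V|-1)/κ₂` and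
`E(τ_b) = (1/|V|) Σ_{u,v} G_{u,v}`. -/
theorem statement_9 {V : Type*} [Fintype V] [DecidableEq V] (c : Sym2 V → ℝ)
    (hc : ∀ e, 0 ≤ c e) (hloop : ∀ v : V, c s(v, v) = 0)
    (hconn : ncomp (Finset.univ.filter fun e : Sym2 V => c e ≠ 0) = 1)
    (b : V) :
    expPow c b 2 =
      (kappa1 c * ((Fintype.card V : ℝ) - 1) / kappa2 c) *
        ((Fintype.card V : ℝ) / ((Fintype.card V : ℝ) - 1)) *
        ((∑ u : V, ∑ v : V, green c b u v) / (Fintype.card V : ℝ)) :=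
  statement_9_general c hc hconn b
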